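/- arXiv:1308.4013 — 4 statements merged into one kernel-verified Lean document; each statement's English description precedes it below -/
import Mathlib

section
/- If f : 2^V → ℝ is a monotone submodular set function on a finite ground set V, and G(S) = E[f(⋃_{s∈S} Y_s)] is the expectation over independent random set-valued variables Y_s ⊆ V, then G is a monotone submodular set function on subsets S of the index set W. -/
/-!
For each outcome `ω` the coverage function `S ↦ f (⋃_{s ∈ S} ω s)` is monotone and
submodular: adding `w` to `S` adds the whole set `ω w` to the argument of `f`, and a monotone
submodular `f` has diminishing returns for whole sets, not only for single elements.
`G` is a nonnegative combination of these coverage functions, so it inherits both properties.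
-/

open Finset

section

variable {V : Type*} [DecidableEq V] {f : Finset V → ℝ}

theorem sub_le_sub_union_of_submodular
    (hmono : ∀ A B : Finset V, A ⊆ B → f A ≤ f B)
    (hsub : ∀ (A B : Finset V) (a : V), A ⊆ B → a ∉ B →
      f (A ∪ {a}) - f A ≥ f (B ∪ {a}) - f B)
    (Y : Finset V) {A B : Finset V} (hAB : A ⊆ B) :
    f (B ∪ Y) - f B ≤ f (A ∪ Y) - f A := by
  induction Y using Finset.induction_on with
  | empty => simp
  | insert a Y _ ih =>
    have step : f (B ∪ Y ∪ {a}) - f (B ∪ Y) ≤ f (A ∪ Y ∪ {a}) - f (A ∪ Y) := by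
      by_cases ha : a ∈ B ∪ Y
      · rw [union_eq_left.2 (singleton_subset_iff.2 ha)]
        linarith [hmono (A ∪ Y) (A ∪ Y ∪ {a}) subset_union_left]
      · exact hsub _ _ a (union_subset_union_left hAB) ha
    rw [← union_singleton, ← union_assoc, ← union_assoc]
    linarith

variable {W : Type*} (ω : W → Finset V)

theorem coverage_mono (hmono : ∀ A B : Finset V, A ⊆ B → f A ≤ f B)
    {S T : Finset W} (hST : S ⊆ T) :
    f (S.biUnion ω) ≤ f (T.biUnion ω) :=
  hmono _ _ (biUnion_subset_biUnion_of_subset_left ω hST)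

theorem coverage_submodular [DecidableEq W]
    (hmono : ∀ A B : Finset V, A ⊆ B → f A ≤ f B)
    (hsub : ∀ (A B : Finset V) (a : V), A ⊆ B → a ∉ B →
      f (A ∪ {a}) - f A ≥ f (B ∪ {a}) - f B)
    {S T : Finset W} (hST : S ⊆ T) (w : W) :
    f ((T ∪ {w}).biUnion ω) - f (T.biUnion ω) ≤ f ((S ∪ {w}).biUnion ω) - f (S.biUnion ω) := by
  simp only [union_biUnion, singleton_biUnion]
  exact sub_le_sub_union_of_submodular hmono hsub (ω w)
    (biUnion_subset_biUnion_of_subset_left ω hST)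

end

theorem stmt0_general {V W : Type*} [Fintype V] [DecidableEq V] [Fintype W] [DecidableEq W]
    (f : Finset V → ℝ)
    (hmono : ∀ A B : Finset V, A ⊆ B → f A ≤ f B)
    (hsub : ∀ (A B : Finset V) (a : V), A ⊆ B → a ∉ B →
      f (A ∪ {a}) - f A ≥ f (B ∪ {a}) - f B)
    (q : W → Finset V → ℝ) (hq0 : ∀ w y, 0 ≤ q w y)
    (G : Finset W → ℝ)
    (hG : ∀ S : Finset W,
      G S = ∑ ω : W → Finset V, (∏ w : W, q w (ω w)) * f (S.biUnion fun s => ω s)) :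
    (∀ S T : Finset W, S ⊆ T → G S ≤ G T) ∧
    (∀ (S T : Finset W) (w : W), S ⊆ T → w ∉ T →
      G (S ∪ {w}) - G S ≥ G (T ∪ {w}) - G T) := by
  have hweight (ω : W → Finset V) : 0 ≤ ∏ w, q w (ω w) :=
    prod_nonneg fun w _ => hq0 w (ω w)
  refine ⟨fun S T hST => ?_, fun S T w hST _ => ?_⟩
  · simp only [hG]
    exact sum_le_sum fun ω _ =>
      mul_le_mul_of_nonneg_left (coverage_mono ω hmono hST) (hweight ω)
  · simp only [hG, ge_iff_le, ← sum_sub_distrib, ← mul_sub]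
    exact sum_le_sum fun ω _ =>
      mul_le_mul_of_nonneg_left (coverage_submodular ω hmono hsub hST w) (hweight ω)

/-- Expectation (over independent set-valued variables, modeled by a product
distribution on `W → Finset V`) of a monotone submodular coverage function is
monotone submodular. -/
theorem stmt0 {V W : Type*} [Fintype V] [DecidableEq V] [Fintype W] [DecidableEq W]
    (f : Finset V → ℝ)
    (hmono : ∀ A B : Finset V, A ⊆ B → f A ≤ f B)
    (hsub : ∀ (A B : Finset V) (a : V), A ⊆ B → a ∉ B →
      f (A ∪ {a}) - f A ≥ f (B ∪ {a}) - f B)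
    (q : W → Finset V → ℝ) (hq0 : ∀ w y, 0 ≤ q w y)
    (hq1 : ∀ w, ∑ y : Finset V, q w y = 1)
    (G : Finset W → ℝ)
    (hG : ∀ S : Finset W,
      G S = ∑ ω : W → Finset V, (∏ w : W, q w (ω w)) * f (S.biUnion fun s => ω s)) :
    (∀ S T : Finset W, S ⊆ T → G S ≤ G T) ∧
    (∀ (S T : Finset W) (w : W), S ⊆ T → w ∉ T →
      G (S ∪ {w}) - G S ≥ G (T ∪ {w}) - G T) :=
  stmt0_general f hmono hsub q hq0 G hG
end

section
/- Suppose a sequence of nonnegative reals g_0 = 0, g_1, …, g_{l+1} and positive costs b_1,…,b_{l+1} with ∑_{i=1}^{l+1} b_i > B > 0 satisfy, for each i, g_i ≥ (b_i/B)·OPT + (1 - b_i/B)·g_{i-1}, where OPT ≥ 0. Then g_{l+1} ≥ (1 - ∏_{i=1}^{l+1}(1 - b_i/B))·OPT ≥ (1 - 1/e)·OPT, assuming each b_i ≤ B. -/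
/-! Each greedy step shrinks the gap `OPT - g i` by the factor `1 - b i / B`, so after `l + 1`
steps the gap is at most `∏ (1 - b i / B) * OPT`. Since `1 - x ≤ exp (-x)`, that product is at
most `exp (-∑ b i / B)`, and `∑ b i > B` makes this at most `1 / e`. -/

open Finset Real

theorem sub_le_prod_one_sub_mul_sub {n : ℕ} (A : ℝ) (c : Fin n → ℝ) (g : ℕ → ℝ)
    (hc : ∀ i, c i ≤ 1) (hrec : ∀ i : Fin n, g (i + 1) ≥ c i * A + (1 - c i) * g i) :
    A - g n ≤ (∏ i, (1 - c i)) * (A - g 0) := by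
  induction n with
  | zero => simp
  | succ n ih =>
    have hstep : A - g (n + 1) ≤ (1 - c (Fin.last n)) * (A - g n) := by
      have := hrec (Fin.last n)
      simp only [Fin.val_last] at this
      linarith
    have hprev := ih (fun i => c i.castSucc) (fun i => hc _) (fun i => hrec i.castSucc)
    calc A - g (n + 1) ≤ (1 - c (Fin.last n)) * (A - g n) := hstep
      _ ≤ (1 - c (Fin.last n)) * ((∏ i : Fin n, (1 - c i.castSucc)) * (A - g 0)) :=
          mul_le_mul_of_nonneg_left hprev (sub_nonneg.2 (hc _))
      _ = (∏ i, (1 - c i)) * (A - g 0) := by rw [Fin.prod_univ_castSucc]; ring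

theorem Finset.prod_one_sub_le_exp_neg_sum {ι : Type*} (s : Finset ι) (x : ι → ℝ)
    (hx : ∀ i ∈ s, x i ≤ 1) : ∏ i ∈ s, (1 - x i) ≤ exp (-∑ i ∈ s, x i) :=
  calc ∏ i ∈ s, (1 - x i) ≤ ∏ i ∈ s, exp (-x i) :=
        prod_le_prod (fun i hi => sub_nonneg.2 (hx i hi)) (fun i _ => one_sub_le_exp_neg _)
    _ = exp (-∑ i ∈ s, x i) := by rw [← sum_neg_distrib, exp_sum]

theorem stmt5_general (l : ℕ) (B OPT : ℝ) (hB : 0 < B) (hOPT : 0 ≤ OPT)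
    (b : Fin (l+1) → ℝ) (hble : ∀ i, b i ≤ B)
    (hsum : ∑ i, b i > B)
    (g : ℕ → ℝ) (hg0 : g 0 = 0)
    (hrec : ∀ i : Fin (l+1),
      g ((i : ℕ) + 1) ≥ (b i / B) * OPT + (1 - b i / B) * g (i : ℕ)) :
    g (l+1) ≥ (1 - ∏ i, (1 - b i / B)) * OPT ∧
    g (l+1) ≥ (1 - 1 / Real.exp 1) * OPT := by
  have hc : ∀ i, b i / B ≤ 1 := fun i => div_le_one_of_le₀ (hble i) hB.le
  have hgap : OPT - g (l + 1) ≤ (∏ i, (1 - b i / B)) * OPT := by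
    simpa [hg0] using sub_le_prod_one_sub_mul_sub OPT (fun i => b i / B) g hc hrec
  have hprod : ∏ i, (1 - b i / B) ≤ exp (-1) :=
    calc ∏ i, (1 - b i / B) ≤ exp (-∑ i, b i / B) :=
          prod_one_sub_le_exp_neg_sum _ _ fun i _ => hc i
      _ ≤ exp (-1) := by
          gcongr
          rw [← sum_div, le_div_iff₀ hB]
          linarith
  rw [one_div, ← exp_neg]
  refine ⟨by linarith, ?_⟩
  linarith [mul_le_mul_of_nonneg_right hprod hOPT]

/-- Standard greedy recursion for budgeted submodular maximization. -/
theorem stmt5 (l : ℕ) (B OPT : ℝ) (hB : 0 < B) (hOPT : 0 ≤ OPT)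
    (b : Fin (l+1) → ℝ) (hb : ∀ i, 0 < b i) (hble : ∀ i, b i ≤ B)
    (hsum : ∑ i, b i > B)
    (g : ℕ → ℝ) (hg0 : g 0 = 0) (hgnn : ∀ i, 0 ≤ g i)
    (hrec : ∀ i : Fin (l+1),
      g ((i : ℕ) + 1) ≥ (b i / B) * OPT + (1 - b i / B) * g (i : ℕ)) :
    g (l+1) ≥ (1 - ∏ i, (1 - b i / B)) * OPT ∧
    g (l+1) ≥ (1 - 1 / Real.exp 1) * OPT :=
  stmt5_general l B OPT hB hOPT b hble hsum g hg0 hrec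
end

section
/- Let Δ_1,…,Δ_l > 0 and b_1,…,b_l > 0 be such that b_{k+1}/Δ_{k+1} ≤ b_{k+2}/Δ_{k+2} ≤ … ≤ b_l/Δ_l and b_{k+1} > (B/α)·Δ_{k+1}/(∑_{i=1}^k Δ_i + Δ_{k+1}), and suppose ∑_{j=k+1}^l b_j ≤ B. Then ∑_{j=k+1}^l Δ_j < α·(∑_{i=1}^k Δ_i + Δ_{k+1}). -/
/-!
Every element of the tail `k+1, …, l` has cost per unit gain `b_j / Δ_j` at least that of
element `k+1`, whose bid exceeds the threshold `c = B / (α S)` times its gain, `S` being the total gain of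
the first `k+1` elements. Hence `b_j > c Δ_j` throughout the tail, and summing against the
budget gives `c ∑ Δ_j < B = c α S`.
-/

open Finset

theorem mul_sum_lt_sum_of_lt_div {ι K : Type*} [Field K] [LinearOrder K] [IsStrictOrderedRing K]
    {s : Finset ι} {w v : ι → K} {c : K} (hs : s.Nonempty) (hw : ∀ j ∈ s, 0 < w j)
    (hc : ∀ j ∈ s, c < v j / w j) : c * ∑ j ∈ s, w j < ∑ j ∈ s, v j := by
  rw [mul_sum]
  exact sum_lt_sum_of_nonempty hs fun j hj => (lt_div_iff₀ (hw j hj)).1 (hc j hj)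

theorem stmt8_general (k l : ℕ) (hkl : k < l) (B α : ℝ) (hB : 0 < B) (hα : 0 < α)
    (Δ b : ℕ → ℝ)
    (hΔ : ∀ i, 1 ≤ i → i ≤ l → 0 < Δ i)
    (hsorted : ∀ j, k + 1 ≤ j → j < l → b j / Δ j ≤ b (j+1) / Δ (j+1))
    (hviol : b (k+1) > (B / α) * Δ (k+1) / ((∑ i ∈ Finset.Icc 1 k, Δ i) + Δ (k+1)))
    (hbudget : ∑ j ∈ Finset.Icc (k+1) l, b j ≤ B) :
    ∑ j ∈ Finset.Icc (k+1) l, Δ j < α * ((∑ i ∈ Finset.Icc 1 k, Δ i) + Δ (k+1)) := by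
  set S := ∑ i ∈ Icc 1 k, Δ i + Δ (k+1)
  have hΔ_tail : ∀ j ∈ Icc (k+1) l, 0 < Δ j := fun j hj =>
    hΔ j (by grind) (mem_Icc.1 hj).2
  have hΔ_succ : 0 < Δ (k+1) := hΔ_tail _ (by grind)
  have hS : 0 < S := add_pos_of_nonneg_of_pos
    (sum_nonneg fun i hi => (hΔ i (mem_Icc.1 hi).1 (by grind)).le) hΔ_succ
  have hthreshold : B / (α * S) < b (k+1) / Δ (k+1) := by
    rw [lt_div_iff₀ hΔ_succ]
    calc B / (α * S) * Δ (k+1) = B / α * Δ (k+1) / S := by field_simp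
      _ < b (k+1) := hviol
  have hratio : MonotoneOn (fun j => b j / Δ j) (Set.Icc (k+1) l) :=
    monotoneOn_of_le_add_one Set.ordConnected_Icc fun j _ hj _ =>
      hsorted j hj.1 (by grind)
  have hbelow : B / (α * S) * ∑ j ∈ Icc (k+1) l, Δ j < B := by
    refine (mul_sum_lt_sum_of_lt_div (nonempty_Icc.2 (by omega)) hΔ_tail fun j hj => ?_).trans_le
      hbudget
    have hj' : j ∈ Set.Icc (k+1) l := by simpa using hj
    exact hthreshold.trans_le (hratio ⟨le_rfl, by omega⟩ hj' hj'.1)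
  rwa [div_mul_eq_mul_div, div_lt_iff₀ (by positivity), mul_lt_mul_iff_right₀ hB] at hbelow

/-- Proportional-share stopping rule bounds the missed utility. -/
theorem stmt8 (k l : ℕ) (hkl : k < l) (B α : ℝ) (hB : 0 < B) (hα : 0 < α)
    (Δ b : ℕ → ℝ)
    (hΔ : ∀ i, 1 ≤ i → i ≤ l → 0 < Δ i)
    (hb : ∀ i, 1 ≤ i → i ≤ l → 0 < b i)
    (hsorted : ∀ j, k + 1 ≤ j → j < l → b j / Δ j ≤ b (j+1) / Δ (j+1))
    (hviol : b (k+1) > (B / α) * Δ (k+1) / ((∑ i ∈ Finset.Icc 1 k, Δ i) + Δ (k+1)))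
    (hbudget : ∑ j ∈ Finset.Icc (k+1) l, b j ≤ B) :
    ∑ j ∈ Finset.Icc (k+1) l, Δ j < α * ((∑ i ∈ Finset.Icc 1 k, Δ i) + Δ (k+1)) :=
  stmt8_general k l hkl B α hB hα Δ b hΔ hsorted hviol hbudget
end

section
/- For fixed subsets y_w ⊆ V and independent random item states, if f is monotone submodular then for any partial realizations ψ ⊆ ψ' not containing w, E[f(∪_{ψ'} ∪ Y_w) − f(∪_{ψ'})] ≤ E[f(∪_{ψ} ∪ Y_w) − f(∪_{ψ})]; that is, the conditional expected marginal gain of item w can never increase as more observations are made. -/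
/-- Adaptive submodularity of the expected coverage objective under a
factorized distribution: the conditional expected marginal gain of user `w`
cannot increase as more observations are made. -/
theorem stmt11 {V W : Type*} [Fintype V] [DecidableEq V] [DecidableEq W]
    (f : Finset V → ℝ)
    (hmono : ∀ A B : Finset V, A ⊆ B → f A ≤ f B)
    (hsub : ∀ A B : Finset V, f A + f B ≥ f (A ∪ B) + f (A ∩ B))
    (w : W) (q : Finset V → ℝ) (hq0 : ∀ y, 0 ≤ q y) (hq1 : ∑ y : Finset V, q y = 1)
    (ψ ψ' : Finset (W × Finset V))
    (hsub' : ψ ⊆ ψ')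
    (hw : ∀ y : Finset V, (w, y) ∉ ψ') :
    ∑ y : Finset V, q y *
        (f ((ψ'.biUnion Prod.snd) ∪ y) - f (ψ'.biUnion Prod.snd)) ≤
    ∑ y : Finset V, q y *
        (f ((ψ.biUnion Prod.snd) ∪ y) - f (ψ.biUnion Prod.snd)) := by
  set A := ψ.biUnion Prod.snd
  set B := ψ'.biUnion Prod.snd
  have hAB : A ⊆ B := Finset.biUnion_subset_biUnion_of_subset_left _ hsub'
  apply Finset.sum_le_sum
  intro y _
  apply mul_le_mul_of_nonneg_left _ (hq0 y)
  have h1 := hsub (A ∪ y) B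
  have h2 : (A ∪ y) ∪ B = B ∪ y := by
    ext v; simp only [Finset.mem_union]; have := @hAB v; tauto
  have h3 : A ⊆ (A ∪ y) ∩ B := by
    intro v hv; exact Finset.mem_inter.2 ⟨Finset.mem_union_left _ hv, hAB hv⟩
  have h4 := hmono _ _ h3
  rw [h2] at h1
  linarith
end
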